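/- Let m ≤ n, W = VΣU as in the dimension-decreasing SVD parametrization. For x ∈ ℝ^n write y = Ux and split y = (y_{1:m}, y_{m+1:n}). Then the map x ↦ (Wx + b, y_{m+1:n}) = ((VΣ_m y_{1:m}) + b, y_{m+1:n}) is a bijection ℝ^n → ℝ^m × ℝ^{n−m} with log absolute Jacobian determinant equal to ∑_{i=1}^m log σ_i, where Σ_m = diag(σ_1,...,σ_m). -/

import Mathlib

/-!
Let `M` be the square matrix whose first `m` rows are those of `W = VΣU` and whose remaining
rows are those of `U`. The map is `x ↦ Mx` followed by splitting off the first `m` coordinates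
and translating them by `b`, so it is bijective as soon as `M` is invertible. Factoring
`M = BU`, where `B` is the identity with its first `m` rows replaced by those of `VΣ`, makes `B`
block upper triangular with diagonal blocks `V · diag σ` and `1`, hence `det M = ∏ σᵢ`.
-/

open Matrix

namespace Matrix

variable {R α : Type*} {m n : ℕ}

def replaceTopRows (A : Matrix (Fin m) α R) (B : Matrix (Fin n) α R) : Matrix (Fin n) α R :=
  of fun i j => if h : (i : ℕ) < m then A ⟨i, h⟩ j else B i j

section Semiring

variable [Fintype α] [NonUnitalNonAssocSemiring R]

theorem replaceTopRows_mul {β : Type*} (A : Matrix (Fin m) α R) (B : Matrix (Fin n) α R)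
    (C : Matrix α β R) :
    replaceTopRows A B * C = replaceTopRows (A * C) (B * C) := by
  ext i j
  by_cases h : (i : ℕ) < m <;> simp [replaceTopRows, mul_apply, h]

theorem replaceTopRows_mulVec_castLE (hmn : m ≤ n) (A : Matrix (Fin m) α R)
    (B : Matrix (Fin n) α R) (x : α → R) (i : Fin m) :
    (replaceTopRows A B *ᵥ x) (Fin.castLE hmn i) = (A *ᵥ x) i := by
  simp [replaceTopRows, mulVec]

theorem replaceTopRows_mulVec_of_le (A : Matrix (Fin m) α R) (B : Matrix (Fin n) α R)
    (x : α → R) {i : Fin n} (hi : m ≤ i) :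
    (replaceTopRows A B *ᵥ x) i = (B *ᵥ x) i := by
  simp [replaceTopRows, mulVec, not_lt.2 hi]

end Semiring

theorem det_replaceTopRows_one [CommRing R] (hmn : m ≤ n) (A : Matrix (Fin m) (Fin n) R) :
    (replaceTopRows A 1).det = (A.submatrix id (Fin.castLE hmn)).det := by
  let e : Fin m ⊕ Fin (n - m) ≃ Fin n :=
    finSumFinEquiv.trans (finCongr (Nat.add_sub_cancel' hmn))
  have hblocks : (replaceTopRows A 1).submatrix e e =
      fromBlocks (A.submatrix id (Fin.castLE hmn)) (A.submatrix id (e ∘ Sum.inr)) 0 1 := by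
    ext (i | i) (j | j)
    all_goals simp [e, replaceTopRows, Fin.ext_iff, one_apply]
    · rfl
    · omega
  rw [← det_submatrix_equiv_self e, hblocks, det_fromBlocks_zero₂₁, det_one, mul_one]

end Matrix

theorem Fin.bijective_castLE_add_prod_natAdd {R : Type*} [AddGroup R] {m n : ℕ} (hmn : m ≤ n)
    (b : Fin m → R) :
    Function.Bijective fun y : Fin n → R =>
      (fun i => y (Fin.castLE hmn i) + b i, fun j : Fin (n - m) => y ⟨m + j, by omega⟩) := by
  let e : Fin m ⊕ Fin (n - m) ≃ Fin n :=
    finSumFinEquiv.trans (finCongr (Nat.add_sub_cancel' hmn))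
  -- Definitionally, the map is `y ↦ y ∘ e`, split along `Fin m ⊕ Fin (n - m)`, then translated.
  exact (((e.arrowCongr (Equiv.refl R)).symm.trans (Equiv.sumArrowEquivProdArrow _ _ R)).trans
    ((Equiv.addRight b).prodCongr (Equiv.refl _))).bijective

theorem Matrix.bijective_mulVec_add_prod_mulVec_of_isUnit_det {R : Type*} [CommRing R]
    {m n : ℕ} (hmn : m ≤ n) (A : Matrix (Fin m) (Fin n) R) (B : Matrix (Fin n) (Fin n) R)
    (b : Fin m → R) (hdet : IsUnit (replaceTopRows A B).det) :
    Function.Bijective fun x : Fin n → R =>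
      (A *ᵥ x + b, fun j : Fin (n - m) => (B *ᵥ x) ⟨m + j, by omega⟩) := by
  have hunit := (isUnit_iff_isUnit_det _).2 hdet
  have hM : Function.Bijective (replaceTopRows A B).mulVec :=
    ⟨mulVec_injective_of_isUnit hunit, mulVec_surjective_iff_isUnit.2 hunit⟩
  convert (Fin.bijective_castLE_add_prod_natAdd hmn b).comp hM using 1
  funext x
  ext i
  · simp [replaceTopRows_mulVec_castLE]
  · exact (replaceTopRows_mulVec_of_le A B x (i := ⟨m + i, _⟩) (Nat.le_add_right m i)).symm

/-- Multi-scale decomposition of a dimension-decreasing linear layer: with `y = Ux`,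
the map `x ↦ (Wx + b, y_{m+1:n})` is a bijection `ℝ^n → ℝ^m × ℝ^{n−m}` whose log
absolute Jacobian determinant equals `∑ᵢ log σᵢ`. -/
theorem multiscale_decomposition_bijective
    {m n : ℕ} (hmn : m ≤ n)
    (U : Matrix (Fin n) (Fin n) ℝ) (V : Matrix (Fin m) (Fin m) ℝ)
    (hUdet : U.det = 1)
    (hVdet : V.det = 1)
    (σ : Fin m → ℝ) (hσ : ∀ i, 0 < σ i)
    (S : Matrix (Fin m) (Fin n) ℝ)
    (hS : ∀ i j, S i j = if (i : ℕ) = (j : ℕ) then σ i else 0)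
    (b : Fin m → ℝ) :
    Function.Bijective (fun x : Fin n → ℝ =>
      (((V * S * U).mulVec x + b : Fin m → ℝ),
        (fun j : Fin (n - m) =>
          U.mulVec x ⟨m + (j : ℕ), by have := j.isLt; omega⟩))) ∧
    Real.log |(Matrix.of (fun i j : Fin n =>
        if h : (i : ℕ) < m then (V * S * U) ⟨(i : ℕ), h⟩ j else U i j)).det| =
      ∑ i, Real.log (σ i) := by
  change _ ∧ Real.log |(replaceTopRows (V * S * U) U).det| = _
  have hS_left : S.submatrix id (Fin.castLE hmn) = diagonal σ := by
    ext i j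
    simp [hS, diagonal_apply, Fin.ext_iff]
  have hdet : (replaceTopRows (V * S * U) U).det = ∏ i, σ i := by
    have hfactor : replaceTopRows (V * S * U) U = replaceTopRows (V * S) 1 * U := by
      rw [replaceTopRows_mul, one_mul]
    rw [hfactor, det_mul, det_replaceTopRows_one hmn,
      submatrix_mul V S id id _ Function.bijective_id, submatrix_id_id, hS_left, det_mul,
      det_diagonal, hVdet, hUdet, one_mul, mul_one]
  have hpos : 0 < ∏ i, σ i := Finset.prod_pos fun i _ => hσ i
  refine ⟨bijective_mulVec_add_prod_mulVec_of_isUnit_det hmn _ U b ?_, ?_⟩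
  · rw [hdet]
    exact hpos.ne'.isUnit
  · rw [hdet, abs_of_pos hpos, Real.log_prod fun i _ => (hσ i).ne']
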